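/- Let L₀(s) = c₀ + s m₀ and L₁(s) = c₁ + s m₁ be skew lines with m₀ a unit vector, t = c₀ − c₁, n₁ = m₁ × t ≠ 0, n̂₁ = n₁/‖n₁‖. Then the minimum pivot angle θ₀ — the infimum over unit vectors m₀' such that the line through c₀ with direction m₀' intersects L₁, of the angle between m₀ and m₀' — satisfies sin θ₀ = |n̂₁ · m₀|. -/

import Mathlib

/-!
Every line through `c₀` that meets `L₁` lies in the plane spanned by `L₁` and `c₀`, whose unit
normal is `n̂₁`. Conversely, every direction of that plane except the direction of `L₁` itself
is realised, and the direction of `L₁` is a limit of realised ones. Hence `cos θ₀` is the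
supremum of `|⟪m₀, u⟫|` over unit vectors `u` of the plane, namely the norm of the
projection `m₀ - ⟪n̂₁, m₀⟫ n̂₁` of `m₀` onto the plane, and `sin θ₀ = |⟪n̂₁, m₀⟫|` by Pythagoras.
-/

open RealInnerProductSpace

/-- The cross product on `EuclideanSpace ℝ (Fin 3)`. -/
noncomputable def cross3 (a b : EuclideanSpace ℝ (Fin 3)) : EuclideanSpace ℝ (Fin 3) :=
  (WithLp.equiv 2 (Fin 3 → ℝ)).symm
    (crossProduct (WithLp.equiv 2 (Fin 3 → ℝ) a) (WithLp.equiv 2 (Fin 3 → ℝ) b))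

open Real Set Filter Topology

section InnerProductSpace

variable {E : Type*} [NormedAddCommGroup E] [InnerProductSpace ℝ E]

lemma abs_inner_smul_div_norm_smul (x v : E) {c : ℝ} (hc : c ≠ 0) :
    |⟪x, c • v⟫| / ‖c • v‖ = |⟪x, v⟫| / ‖v‖ := by
  rw [real_inner_smul_right, norm_smul, Real.norm_eq_abs, abs_mul,
    mul_div_mul_left _ _ (abs_ne_zero.mpr hc)]

lemma abs_inner_smul_left_div_norm (c : ℝ) (v : E) : |⟪c • v, v⟫| / ‖v‖ = ‖c • v‖ := by
  rw [real_inner_smul_left, real_inner_self_eq_norm_sq, abs_mul, abs_sq, norm_smul,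
    Real.norm_eq_abs, pow_two]
  rcases eq_or_ne ‖v‖ 0 with hv | hv
  · simp [hv]
  · field_simp

lemma norm_sq_sub_inner_smul {e : E} (he : ‖e‖ = 1) (x : E) :
    ‖x - ⟪e, x⟫ • e‖ ^ 2 = ‖x‖ ^ 2 - ⟪e, x⟫ ^ 2 := by
  rw [norm_sub_sq_real, real_inner_smul_right, norm_smul, Real.norm_eq_abs, he,
    real_inner_comm]
  simp only [mul_one, sq_abs]
  ring

lemma inner_sub_inner_smul_of_inner_eq_zero {e x v : E} (hv : ⟪e, v⟫ = 0) :
    ⟪x - ⟪e, x⟫ • e, v⟫ = ⟪x, v⟫ := by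
  rw [inner_sub_left, real_inner_smul_left, hv, mul_zero, sub_zero]

lemma inner_sub_inner_smul_self {e : E} (he : ‖e‖ = 1) (x : E) : ⟪x - ⟪e, x⟫ • e, e⟫ = 0 := by
  rw [inner_sub_left, real_inner_smul_left, real_inner_self_eq_norm_sq, he, real_inner_comm]
  ring

/-- The value `‖p‖` is attained at `β = b / a` when `a ≠ 0`, and approached as `β → ∞`
when `p` is parallel to `m`. -/
lemma norm_mem_closure_range_abs_inner_div_norm {p q m : E} {a b : ℝ} (hm : m ≠ 0)
    (hp : p = a • q + b • m) :
    ‖p‖ ∈ closure (range fun β : ℝ => |⟪p, q + β • m⟫| / ‖q + β • m‖) := by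
  rcases eq_or_ne a 0 with rfl | ha
  · have hw : Tendsto (fun β : ℝ => m + β⁻¹ • q) atTop (𝓝 m) := by
      simpa using tendsto_const_nhds.add ((tendsto_inv_atTop_zero (𝕜 := ℝ)).smul_const q)
    have hlim : Tendsto (fun β : ℝ => |⟪p, m + β⁻¹ • q⟫| / ‖m + β⁻¹ • q‖) atTop (𝓝 ‖p‖) := by
      have hpm : p = b • m := by simpa using hp
      rw [hpm, ← abs_inner_smul_left_div_norm]
      exact (tendsto_const_nhds.inner hw).abs.div hw.norm (norm_ne_zero_iff.mpr hm)
    refine mem_closure_of_tendsto (hlim.congr' ?_) (Eventually.of_forall mem_range_self)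
    filter_upwards [eventually_ne_atTop 0] with β hβ
    rw [← abs_inner_smul_div_norm_smul p _ hβ, smul_add, smul_inv_smul₀ hβ, add_comm]
  · refine subset_closure ⟨b / a, ?_⟩
    have hdir : q + (b / a) • m = a⁻¹ • p := by
      rw [hp, smul_add, smul_smul, smul_smul, inv_mul_cancel₀ ha, one_smul, div_eq_inv_mul]
    simp only [hdir, abs_inner_smul_div_norm_smul p p (inv_ne_zero ha)]
    simpa using abs_inner_smul_left_div_norm 1 p

def pivotAngles (c₀ c₁ m₀ m₁ : E) : Set ℝ :=
  {θ | ∃ m₀' : E, ‖m₀'‖ = 1 ∧ (∃ α β : ℝ, c₀ + α • m₀' = c₁ + β • m₁) ∧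
    θ = arccos |⟪m₀, m₀'⟫|}

variable {c₀ c₁ m₀ m₁ e : E}

lemma arccos_abs_inner_div_norm_mem_pivotAngles {β : ℝ} (hβ : c₁ + β • m₁ ≠ c₀) :
    arccos (|⟪m₀, c₁ - c₀ + β • m₁⟫| / ‖c₁ - c₀ + β • m₁‖) ∈ pivotAngles c₀ c₁ m₀ m₁ := by
  set v := c₁ - c₀ + β • m₁ with hv_def
  have hv : ‖v‖ ≠ 0 := norm_ne_zero_iff.mpr fun h => hβ (by
    rw [← sub_eq_zero, ← h, hv_def]; abel)
  refine ⟨‖v‖⁻¹ • v, ?_, ⟨‖v‖, β, ?_⟩, ?_⟩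
  · rw [norm_smul, norm_inv, norm_norm, inv_mul_cancel₀ hv]
  · rw [smul_inv_smul₀ hv, hv_def]; abel
  · rw [real_inner_smul_right, abs_mul, abs_inv, abs_norm, inv_mul_eq_div]

lemma arccos_norm_sub_inner_smul_le_of_mem_pivotAngles (hc₀ : ∀ β : ℝ, c₁ + β • m₁ ≠ c₀)
    (he₁ : ⟪e, m₁⟫ = 0) (he : ⟪e, c₁ - c₀⟫ = 0) {θ : ℝ} (hθ : θ ∈ pivotAngles c₀ c₁ m₀ m₁) :
    arccos ‖m₀ - ⟪e, m₀⟫ • e‖ ≤ θ := by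
  obtain ⟨u, hu, ⟨α, β, hαβ⟩, rfl⟩ := hθ
  have hα : α ≠ 0 := by
    rintro rfl
    exact hc₀ β (by simpa using hαβ.symm)
  have hαu : α • u = c₁ - c₀ + β • m₁ := by
    rw [sub_add_eq_add_sub, ← hαβ, add_sub_cancel_left]
  have heu : ⟪e, u⟫ = 0 := by
    have h := congrArg (⟪e, ·⟫) hαu
    simp only [real_inner_smul_right, inner_add_right, he, he₁, mul_zero, add_zero] at h
    exact (mul_eq_zero.mp h).resolve_left hα
  apply arccos_le_arccos
  calc |⟪m₀, u⟫| = |⟪m₀ - ⟪e, m₀⟫ • e, u⟫| := by rw [inner_sub_inner_smul_of_inner_eq_zero heu]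
    _ ≤ ‖m₀ - ⟪e, m₀⟫ • e‖ * ‖u‖ := abs_real_inner_le_norm _ _
    _ = ‖m₀ - ⟪e, m₀⟫ • e‖ := by rw [hu, mul_one]

theorem sInf_pivotAngles (hm₁ : m₁ ≠ 0) (hc₀ : ∀ β : ℝ, c₁ + β • m₁ ≠ c₀)
    (he₁ : ⟪e, m₁⟫ = 0) (he : ⟪e, c₁ - c₀⟫ = 0)
    (hspan : ∃ a b : ℝ, m₀ - ⟪e, m₀⟫ • e = a • (c₁ - c₀) + b • m₁) :
    sInf (pivotAngles c₀ c₁ m₀ m₁) = arccos ‖m₀ - ⟪e, m₀⟫ • e‖ := by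
  obtain ⟨a, b, hp⟩ := hspan
  have hproj (β : ℝ) : ⟪m₀ - ⟪e, m₀⟫ • e, c₁ - c₀ + β • m₁⟫ = ⟪m₀, c₁ - c₀ + β • m₁⟫ := by
    apply inner_sub_inner_smul_of_inner_eq_zero
    rw [inner_add_right, real_inner_smul_right, he, he₁, mul_zero, add_zero]
  refine (isGLB_of_mem_closure (fun θ hθ => ?_) ?_).csInf_eq
    ⟨_, arccos_abs_inner_div_norm_mem_pivotAngles (hc₀ 0)⟩
  · exact arccos_norm_sub_inner_smul_le_of_mem_pivotAngles hc₀ he₁ he hθ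
  · refine map_mem_closure continuous_arccos (norm_mem_closure_range_abs_inner_div_norm hm₁ hp) ?_
    rintro _ ⟨β, rfl⟩
    simpa only [hproj] using arccos_abs_inner_div_norm_mem_pivotAngles (hc₀ β)

end InnerProductSpace

section Cross3

lemma inner_cross3_self_left (a b : EuclideanSpace ℝ (Fin 3)) : ⟪cross3 a b, a⟫ = 0 := by
  simp [cross3, EuclideanSpace.inner_eq_star_dotProduct, dot_self_cross]

lemma inner_cross3_self_right (a b : EuclideanSpace ℝ (Fin 3)) : ⟪cross3 a b, b⟫ = 0 := by
  simp [cross3, EuclideanSpace.inner_eq_star_dotProduct, dot_cross_self]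

lemma cross3_zero_left (b : EuclideanSpace ℝ (Fin 3)) : cross3 0 b = 0 := by
  simp [cross3]

lemma cross3_smul_right_self (a : EuclideanSpace ℝ (Fin 3)) (c : ℝ) : cross3 a (c • a) = 0 := by
  simp [cross3, cross_self]

/-- The expansion of `x` in the basis `u, v, u × v` (when `u × v ≠ 0`), scaled to avoid division. -/
lemma inner_cross3_self_smul_eq (u v x : EuclideanSpace ℝ (Fin 3)) :
    ⟪cross3 u v, cross3 u v⟫ • x =
      (⟪x, v⟫ * ⟪u, u⟫ - ⟪x, u⟫ * ⟪v, u⟫) • v + (⟪x, u⟫ * ⟪v, v⟫ - ⟪x, v⟫ * ⟪u, v⟫) • u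
        + ⟪x, cross3 u v⟫ • cross3 u v := by
  ext i
  simp only [PiLp.add_apply, PiLp.smul_apply, smul_eq_mul, PiLp.inner_apply,
    Fin.sum_univ_three, cross3, crossProduct]
  fin_cases i <;> simp <;> ring

lemma exists_eq_smul_add_smul_of_inner_cross3_eq_zero {u v x : EuclideanSpace ℝ (Fin 3)}
    (huv : cross3 u v ≠ 0) (hx : ⟪x, cross3 u v⟫ = 0) : ∃ a b : ℝ, x = a • v + b • u := by
  have hk : ⟪cross3 u v, cross3 u v⟫ ≠ 0 := inner_self_ne_zero.mpr huv
  have h := inner_cross3_self_smul_eq u v x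
  rw [hx, zero_smul, add_zero, ← eq_inv_smul_iff₀ hk, smul_add, smul_smul, smul_smul] at h
  exact ⟨_, _, h⟩

end Cross3

theorem min_pivot_angle_general (c₀ c₁ m₀ m₁ : EuclideanSpace ℝ (Fin 3))
    (hm₀ : ‖m₀‖ = 1)
    (hn : cross3 m₁ (c₀ - c₁) ≠ 0) :
    let n₁ := cross3 m₁ (c₀ - c₁)
    let nhat := ‖n₁‖⁻¹ • n₁
    Real.sin (sInf {θ : ℝ | ∃ m₀' : EuclideanSpace ℝ (Fin 3), ‖m₀'‖ = 1 ∧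
        (∃ α β : ℝ, c₀ + α • m₀' = c₁ + β • m₁) ∧
        θ = Real.arccos |⟪m₀, m₀'⟫|}) = |⟪nhat, m₀⟫| := by
  intro n₁ nhat
  have hinv : ‖n₁‖⁻¹ ≠ 0 := inv_ne_zero (norm_ne_zero_iff.mpr hn)
  have hnhat : ‖nhat‖ = 1 := norm_smul_inv_norm hn
  have hm₁ : m₁ ≠ 0 := by
    rintro rfl
    exact hn (cross3_zero_left _)
  have hc₀ (β : ℝ) : c₁ + β • m₁ ≠ c₀ := fun h => hn (by
    rw [← h, add_sub_cancel_left, cross3_smul_right_self])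
  have he₁ : ⟪nhat, m₁⟫ = 0 := by
    rw [real_inner_smul_left, inner_cross3_self_left, mul_zero]
  have he : ⟪nhat, c₁ - c₀⟫ = 0 := by
    rw [← neg_sub, inner_neg_right, real_inner_smul_left, inner_cross3_self_right, mul_zero,
      neg_zero]
  have hspan : ∃ a b : ℝ, m₀ - ⟪nhat, m₀⟫ • nhat = a • (c₁ - c₀) + b • m₁ := by
    have hperp := inner_sub_inner_smul_self hnhat m₀
    rw [real_inner_smul_right, mul_eq_zero, or_iff_right hinv] at hperp
    obtain ⟨a, b, hab⟩ := exists_eq_smul_add_smul_of_inner_cross3_eq_zero hn hperp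
    exact ⟨-a, b, by rw [hab, ← neg_sub c₀ c₁, smul_neg, neg_smul, neg_neg]⟩
  change sin (sInf (pivotAngles c₀ c₁ m₀ m₁)) = _
  rw [sInf_pivotAngles hm₁ hc₀ he₁ he hspan, sin_arccos, norm_sq_sub_inner_smul hnhat, hm₀,
    one_pow, sub_sub_cancel, sqrt_sq_eq_abs]

/-- Minimum pivot angle for intersection: sin θ₀ = |n̂₁ · m₀|. -/
theorem min_pivot_angle (c₀ c₁ m₀ m₁ : EuclideanSpace ℝ (Fin 3))
    (hq : cross3 m₀ m₁ ≠ 0)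
    (hskew : ¬ ∃ s₀ s₁ : ℝ, c₀ + s₀ • m₀ = c₁ + s₁ • m₁)
    (hm₀ : ‖m₀‖ = 1)
    (hn : cross3 m₁ (c₀ - c₁) ≠ 0) :
    let n₁ := cross3 m₁ (c₀ - c₁)
    let nhat := ‖n₁‖⁻¹ • n₁
    Real.sin (sInf {θ : ℝ | ∃ m₀' : EuclideanSpace ℝ (Fin 3), ‖m₀'‖ = 1 ∧
        (∃ α β : ℝ, c₀ + α • m₀' = c₁ + β • m₁) ∧
        θ = Real.arccos |⟪m₀, m₀'⟫|}) = |⟪nhat, m₀⟫| :=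
  min_pivot_angle_general c₀ c₁ m₀ m₁ hm₀ hn
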